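/- arXiv:2010.08536 — 2 statements merged into one kernel-verified Lean document; each statement's English description precedes it below -/
import Mathlib

section
/- Let T_t, T_x, T_y, T_u, X_t, X_x, X_y, X_u, Y_t, Y_x, Y_y, Y_u, U_t, U_x, U_y, U_u be real numbers forming the 4×4 matrix M with rows (T_t,T_x,T_y,T_u), (X_t,X_x,X_y,X_u), (Y_t,Y_x,Y_y,Y_u), (U_t,U_x,U_y,U_u), and suppose det M ≠ 0. If for each μ ∈ {x,y} one has T_μ·T_u = 0, T_μ·X_u − T_u·X_μ = 0, T_μ·Y_u − T_u·Y_μ = 0, and T_μ·U_u − T_u·U_μ = 0, then T_x = T_y = T_u = 0. -/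
/-! For μ ∈ {x, y} the hypotheses say that `T_μ` times the `u`-column of the Jacobian matrix
equals `T_u` times its `μ`-column: the three equations give the `X`, `Y`, `U` entries and the
`T` entry reads `T_μ T_u = T_u T_μ`. Distinct columns of a nonsingular matrix are linearly
independent, so both coefficients vanish. -/

theorem Matrix.eq_zero_of_mul_col_eq_mul_col {R m : Type*} [CommRing R] [IsDomain R] [Fintype m]
    [DecidableEq m] {A : Matrix m m R} (hA : A.det ≠ 0) {j k : m} (hjk : j ≠ k) {a b : R}
    (h : ∀ i, a * A i j = b * A i k) : a = 0 ∧ b = 0 := by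
  have hpair := (LinearIndepOn.pair_iff A.col hjk).mp
    ((linearIndependent_cols_of_det_ne_zero hA).linearIndepOn _) a (-b)
  simpa using hpair (funext fun i => by simp [Matrix.col, h i])

theorem stmt_0_general (Tt Tx Ty Tu Xt Xx Xy Xu Yt Yx Yy Yu Ut Ux Uy Uu : ℝ)
    (hdet : Matrix.det
      !![Tt, Tx, Ty, Tu; Xt, Xx, Xy, Xu; Yt, Yx, Yy, Yu; Ut, Ux, Uy, Uu] ≠ 0)
    (h2x : Tx * Xu - Tu * Xx = 0)
    (h3x : Tx * Yu - Tu * Yx = 0) (h4x : Tx * Uu - Tu * Ux = 0)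
    (h2y : Ty * Xu - Tu * Xy = 0)
    (h3y : Ty * Yu - Tu * Yy = 0) (h4y : Ty * Uu - Tu * Uy = 0) :
    Tx = 0 ∧ Ty = 0 ∧ Tu = 0 := by
  obtain ⟨hTx, hTu⟩ := Matrix.eq_zero_of_mul_col_eq_mul_col hdet (j := 3) (k := 1) (by decide)
    (a := Tx) (b := Tu) fun i => by
      fin_cases i <;> simp [mul_comm, ← sub_eq_zero, h2x, h3x, h4x]
  obtain ⟨hTy, -⟩ := Matrix.eq_zero_of_mul_col_eq_mul_col hdet (j := 3) (k := 2) (by decide)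
    (a := Ty) (b := Tu) fun i => by
      fin_cases i <;> simp [mul_comm, ← sub_eq_zero, h2y, h3y, h4y]
  exact ⟨hTx, hTy, hTu⟩

/-- If the 4×4 Jacobian matrix of (T,X,Y,U) is nondegenerate and for each
μ ∈ {x,y} one has T_μ T_u = 0, T_μ X_u − T_u X_μ = 0, T_μ Y_u − T_u Y_μ = 0 and
T_μ U_u − T_u U_μ = 0, then T_x = T_y = T_u = 0. -/
theorem stmt_0 (Tt Tx Ty Tu Xt Xx Xy Xu Yt Yx Yy Yu Ut Ux Uy Uu : ℝ)
    (hdet : Matrix.det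
      !![Tt, Tx, Ty, Tu; Xt, Xx, Xy, Xu; Yt, Yx, Yy, Yu; Ut, Ux, Uy, Uu] ≠ 0)
    (h1x : Tx * Tu = 0) (h2x : Tx * Xu - Tu * Xx = 0)
    (h3x : Tx * Yu - Tu * Yx = 0) (h4x : Tx * Uu - Tu * Ux = 0)
    (h1y : Ty * Tu = 0) (h2y : Ty * Xu - Tu * Xy = 0)
    (h3y : Ty * Yu - Tu * Yy = 0) (h4y : Ty * Uu - Tu * Uy = 0) :
    Tx = 0 ∧ Ty = 0 ∧ Tu = 0 :=
  stmt_0_general Tt Tx Ty Tu Xt Xx Xy Xu Yt Yx Yy Yu Ut Ux Uy Uu hdet h2x h3x h4x h2y h3y h4y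
end

section
/- Let F, G, H, K : ℝ³ → ℝ be functions of (x, y, q) and let u : ℝ³ → ℝ be a C² function of (t,x,y) satisfying, at every point, u_t = F(x,y,u_y)·u_xx + G(x,y,u_y)·u_yy + H(x,y,u_y)·u_xy + K(x,y,u_y). Then for every s ∈ ℝ and all constants a, b ∈ ℝ, the function v(t,x,y) := u(t+s,x,y) + a + b·x satisfies the same equation at every point. -/
/-- Partial derivative in `t` of a function `u(t,x,y)` on ℝ³. -/
noncomputable def pdT (u : ℝ × ℝ × ℝ → ℝ) (p : ℝ × ℝ × ℝ) : ℝ :=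
  deriv (fun s : ℝ => u (s, p.2.1, p.2.2)) p.1

/-- Partial derivative in `x` of a function `u(t,x,y)` on ℝ³. -/
noncomputable def pdX (u : ℝ × ℝ × ℝ → ℝ) (p : ℝ × ℝ × ℝ) : ℝ :=
  deriv (fun s : ℝ => u (p.1, s, p.2.2)) p.2.1

/-- Partial derivative in `y` of a function `u(t,x,y)` on ℝ³. -/
noncomputable def pdY (u : ℝ × ℝ × ℝ → ℝ) (p : ℝ × ℝ × ℝ) : ℝ :=
  deriv (fun s : ℝ => u (p.1, p.2.1, s)) p.2.2

/-- Second partial derivative `u_xx`. -/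
noncomputable def pdXX (u : ℝ × ℝ × ℝ → ℝ) : ℝ × ℝ × ℝ → ℝ := pdX (pdX u)

/-- Second partial derivative `u_yy`. -/
noncomputable def pdYY (u : ℝ × ℝ × ℝ → ℝ) : ℝ × ℝ × ℝ → ℝ := pdY (pdY u)

/-- Mixed second partial derivative `u_xy = ∂_x ∂_y u`. -/
noncomputable def pdXY (u : ℝ × ℝ × ℝ → ℝ) : ℝ × ℝ × ℝ → ℝ := pdX (pdY u)

/-!
Time translation and adding a function of `x` alone commute with `∂_t` and `∂_y`, while `∂_x`
only picks up the derivative of the added function. For `a + b·x` that derivative is the constant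
`b`, which the second `x`-derivative kills, so every term of the equation for `v` at `p` is the
corresponding term of the equation for `u` at the translated point.
-/

def timeShift (s : ℝ) (q : ℝ × ℝ × ℝ) : ℝ × ℝ × ℝ := (q.1 + s, q.2.1, q.2.2)

section TimeShiftAdd

variable {u v : ℝ × ℝ × ℝ → ℝ} {s : ℝ}

theorem pdT_eq_of_timeShift_add {g : ℝ → ℝ} (hv : ∀ q, v q = u (timeShift s q) + g q.2.1)
    (p : ℝ × ℝ × ℝ) : pdT v p = pdT u (timeShift s p) := by
  have hfun : (fun t : ℝ => v (t, p.2.1, p.2.2))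
      = fun t => u (t + s, p.2.1, p.2.2) + g p.2.1 := funext fun t => hv _
  rw [pdT, hfun, deriv_add_const, deriv_comp_add_const (fun t => u (t, p.2.1, p.2.2))]
  rfl

theorem pdY_eq_of_timeShift_add {g : ℝ → ℝ} (hv : ∀ q, v q = u (timeShift s q) + g q.2.1)
    (p : ℝ × ℝ × ℝ) : pdY v p = pdY u (timeShift s p) := by
  have hfun : (fun y : ℝ => v (p.1, p.2.1, y))
      = fun y => u (p.1 + s, p.2.1, y) + g p.2.1 := funext fun y => hv _
  rw [pdY, hfun, deriv_add_const]
  rfl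

theorem pdX_eq_of_timeShift_add_const {c : ℝ} (hv : ∀ q, v q = u (timeShift s q) + c)
    (p : ℝ × ℝ × ℝ) : pdX v p = pdX u (timeShift s p) := by
  have hfun : (fun x : ℝ => v (p.1, x, p.2.2))
      = fun x => u (p.1 + s, x, p.2.2) + c := funext fun x => hv _
  rw [pdX, hfun, deriv_add_const]
  rfl

theorem pdX_eq_of_timeShift_add (hu : Differentiable ℝ u) {g : ℝ → ℝ} (hg : Differentiable ℝ g)
    (hv : ∀ q, v q = u (timeShift s q) + g q.2.1) (p : ℝ × ℝ × ℝ) :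
    pdX v p = pdX u (timeShift s p) + deriv g p.2.1 := by
  have hfun : (fun x : ℝ => v (p.1, x, p.2.2))
      = fun x => u (p.1 + s, x, p.2.2) + g x := funext fun x => hv _
  have hux : DifferentiableAt ℝ (fun x : ℝ => u (p.1 + s, x, p.2.2)) p.2.1 :=
    (hu _).comp _ (by fun_prop)
  rw [pdX, hfun, deriv_fun_add hux (hg _)]
  rfl

end TimeShiftAdd

/-- invariance under (t,u) ↦ (t+s, u + a + b·x) (algebra ⟨∂_t, ∂_u, x∂_u⟩) for u_t = F(x,y,u_y)u_xx + … . -/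
theorem stmt_13 (F G H K : ℝ × ℝ × ℝ → ℝ) (u : ℝ × ℝ × ℝ → ℝ)
    (hu : ContDiff ℝ 2 u)
    (heq : ∀ p : ℝ × ℝ × ℝ,
      pdT u p = F (p.2.1, p.2.2, pdY u p) * pdXX u p
        + G (p.2.1, p.2.2, pdY u p) * pdYY u p
        + H (p.2.1, p.2.2, pdY u p) * pdXY u p
        + K (p.2.1, p.2.2, pdY u p))
    (s a b : ℝ) (v : ℝ × ℝ × ℝ → ℝ)
    (hv : ∀ q : ℝ × ℝ × ℝ, v q = u (q.1 + s, q.2.1, q.2.2) + a + b * q.2.1) :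
    ∀ p : ℝ × ℝ × ℝ,
      pdT v p = F (p.2.1, p.2.2, pdY v p) * pdXX v p
        + G (p.2.1, p.2.2, pdY v p) * pdYY v p
        + H (p.2.1, p.2.2, pdY v p) * pdXY v p
        + K (p.2.1, p.2.2, pdY v p) := by
  set g : ℝ → ℝ := fun x => a + b * x
  have hv' : ∀ q, v q = u (timeShift s q) + g q.2.1 := fun q => by
    rw [hv, add_assoc]; rfl
  have hY : ∀ q, pdY v q = pdY u (timeShift s q) + 0 := fun q => by
    rw [pdY_eq_of_timeShift_add hv', add_zero]
  have hX : ∀ q, pdX v q = pdX u (timeShift s q) + b := fun q => by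
    rw [pdX_eq_of_timeShift_add (hu.differentiable (by norm_num)) (by fun_prop) hv']
    simp [g]
  intro p
  rw [pdT_eq_of_timeShift_add hv', pdY_eq_of_timeShift_add hv', pdXX, pdYY, pdXY,
    pdX_eq_of_timeShift_add_const hX, pdY_eq_of_timeShift_add (g := fun _ => 0) hY,
    pdX_eq_of_timeShift_add_const hY]
  exact heq _
end
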